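/- Let x ∈ ℝ^m have support N := {i : x_i ≠ 0}, let T_det ⊆ {1,…,m}, Δ_det := N \ T_det, and y = A x + w with ‖w‖₂ ≤ ε. Assume |T_det| ≤ S_T, |Δ_det| ≤ S_Δ, some δ < 1/2 is an S_T-restricted isometry bound for A, and θ is an (S_T, S_Δ)-restricted orthogonality bound for A. Let x̂_det be the LS estimate on T_det from y. If α_del ≥ √2·ε + 2θ·‖x_{Δ_det}‖₂, then |x̂_{det,i}| ≤ α_del for every i ∈ T_det with x_i = 0, i.e., every extra element of T_det is deleted by the threshold-α_del deletion step. -/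
import Mathlib


open Finset

attribute [local instance] Classical.propDecidable

/-- Euclidean (ℓ2) norm of a finite real vector. -/
noncomputable def norm2 {k : ℕ} (v : Fin k → ℝ) : ℝ := Real.sqrt (∑ i, v i ^ 2)

/-- ℓ∞ norm (maximum absolute entry) of a finite real vector. -/
noncomputable def normInf {k : ℕ} (v : Fin k → ℝ) : ℝ := ⨆ i, |v i|

/-- Support of a vector, as a finset. -/
noncomputable def spt {k : ℕ} (v : Fin k → ℝ) : Finset (Fin k) :=
  Finset.univ.filter (fun i => v i ≠ 0)

/-- Restriction of a vector to the coordinates indexed by `T` (zero elsewhere). -/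
noncomputable def restr {k : ℕ} (T : Finset (Fin k)) (v : Fin k → ℝ) : Fin k → ℝ :=
  fun i => if i ∈ T then v i else 0

/-- `δ ∈ [0,1)` is an `S`-restricted isometry bound for `A`:
`(1-δ)‖z‖² ≤ ‖Az‖² ≤ (1+δ)‖z‖²` for every `z` with at most `S` nonzero entries. -/
def RIPBound {n m : ℕ} (A : Matrix (Fin n) (Fin m) ℝ) (S : ℕ) (δ : ℝ) : Prop :=
  0 ≤ δ ∧ δ < 1 ∧
    ∀ z : Fin m → ℝ, (spt z).card ≤ S →
      (1 - δ) * (∑ i, z i ^ 2) ≤ (∑ j, (A.mulVec z) j ^ 2) ∧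
      (∑ j, (A.mulVec z) j ^ 2) ≤ (1 + δ) * (∑ i, z i ^ 2)

/-- `θ ≥ 0` is an `(S,S')`-restricted orthogonality bound for `A`:
`|⟨Az, Az'⟩| ≤ θ‖z‖‖z'‖` for all `z, z'` with disjoint supports of cardinalities `≤ S, S'`. -/
def ROBound {n m : ℕ} (A : Matrix (Fin n) (Fin m) ℝ) (S S' : ℕ) (θ : ℝ) : Prop :=
  0 ≤ θ ∧
    ∀ z z' : Fin m → ℝ, Disjoint (spt z) (spt z') →
      (spt z).card ≤ S → (spt z').card ≤ S' →
      |∑ j, (A.mulVec z) j * (A.mulVec z') j| ≤ θ * norm2 z * norm2 z'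

/-- A modified-CS estimate with known part `T`: feasible and with minimal ℓ1 norm outside `T`
among all feasible vectors. -/
def ModCS {n m : ℕ} (A : Matrix (Fin n) (Fin m) ℝ) (y : Fin n → ℝ) (ε : ℝ)
    (T : Finset (Fin m)) (xhat : Fin m → ℝ) : Prop :=
  norm2 (fun j => y j - (A.mulVec xhat) j) ≤ ε ∧
    ∀ β : Fin m → ℝ, norm2 (fun j => y j - (A.mulVec β) j) ≤ ε →
      ∑ i ∈ Tᶜ, |xhat i| ≤ ∑ i ∈ Tᶜ, |β i|

/-- The LS estimate on `T` from `y`: supported on `T` and satisfying the normal equations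
`A_Tᵀ (y - A x̂) = 0` (equivalently `x̂_T = (A_Tᵀ A_T)⁻¹ A_Tᵀ y` when `A_T` has
full column rank). -/
def IsLS {n m : ℕ} (A : Matrix (Fin n) (Fin m) ℝ) (y : Fin n → ℝ)
    (T : Finset (Fin m)) (xhat : Fin m → ℝ) : Prop :=
  (∀ i, i ∉ T → xhat i = 0) ∧
    ∀ i ∈ T, (∑ j, A j i * (y j - (A.mulVec xhat) j)) = 0

/-- `C₁(δ) = 4√(1+δ)/(1-(√2+1)δ)`. -/
noncomputable def C1 (δ : ℝ) : ℝ := 4 * Real.sqrt (1 + δ) / (1 - (Real.sqrt 2 + 1) * δ)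

/-- `C₂(δ) = 2(1+(√2-1)δ)/(1-(√2+1)δ)`. -/
noncomputable def C2 (δ : ℝ) : ℝ := 2 * (1 + (Real.sqrt 2 - 1) * δ) / (1 - (Real.sqrt 2 + 1) * δ)

lemma norm2_nonneg' {k : ℕ} (v : Fin k → ℝ) : 0 ≤ norm2 v := Real.sqrt_nonneg _

lemma sum_sq_nonneg' {k : ℕ} (v : Fin k → ℝ) : 0 ≤ ∑ i, v i ^ 2 :=
  Finset.sum_nonneg fun i _ => sq_nonneg _

lemma sq_norm2' {k : ℕ} (v : Fin k → ℝ) : norm2 v ^ 2 = ∑ i, v i ^ 2 :=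
  Real.sq_sqrt (sum_sq_nonneg' v)

lemma abs_le_norm2' {k : ℕ} (v : Fin k → ℝ) (i : Fin k) : |v i| ≤ norm2 v := by
  rw [← Real.sqrt_sq_eq_abs]
  exact Real.sqrt_le_sqrt (Finset.single_le_sum (fun j _ => sq_nonneg (v j)) (mem_univ i))

lemma cs' {k : ℕ} (f g : Fin k → ℝ) : |∑ j, f j * g j| ≤ norm2 f * norm2 g := by
  rw [← Real.sqrt_sq_eq_abs, norm2, norm2, ← Real.sqrt_mul (sum_sq_nonneg' f)]
  exact Real.sqrt_le_sqrt (Finset.sum_mul_sq_le_sq_mul_sq _ _ _)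

lemma deletion_numeric (u a v ε θ δ : ℝ) (hu0 : 0 ≤ u) (ha0 : 0 ≤ a) (hv0 : 0 ≤ v)
    (hε0 : 0 ≤ ε) (hθ0 : 0 ≤ θ) (hδ : δ < 1 / 2)
    (hRIP : (1 - δ) * u ^ 2 ≤ a ^ 2) (hkey : a ^ 2 ≤ θ * u * v + a * ε) :
    u ≤ Real.sqrt 2 * ε + 2 * θ * v := by
  set s : ℝ := Real.sqrt (1 - δ) with hs
  have h1δ : (0:ℝ) < 1 - δ := by linarith
  have hs0 : 0 < s := Real.sqrt_pos.mpr h1δ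
  have hs2 : s ^ 2 = 1 - δ := Real.sq_sqrt (le_of_lt h1δ)
  have hsu : s * u ≤ a := by
    have h1 : (s * u) ^ 2 ≤ a ^ 2 := by nlinarith
    have := Real.sqrt_le_sqrt h1
    rwa [Real.sqrt_sq (by positivity), Real.sqrt_sq ha0] at this
  have h2s : 1 ≤ Real.sqrt 2 * s := by
    have h1 : (1:ℝ) ≤ 2 * (1 - δ) := by linarith
    have h2 : Real.sqrt 1 ≤ Real.sqrt (2 * (1 - δ)) := Real.sqrt_le_sqrt h1
    rwa [Real.sqrt_one, Real.sqrt_mul (by norm_num : (0:ℝ) ≤ 2)] at h2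
  have hsqrt2 : 0 < Real.sqrt 2 := by positivity
  rcases eq_or_lt_of_le ha0 with hA | hA
  · have h1 : s * u ≤ 0 := by rw [← hA] at hsu; exact hsu
    have hu0' : u ≤ 0 := by nlinarith
    have : 0 ≤ Real.sqrt 2 * ε + 2 * θ * v := by positivity
    linarith
  · have hsa : s * a ≤ θ * v + s * ε := by
      have hmul : a * (s * a) ≤ a * (θ * v + s * ε) := by
        have h1 : θ * (s * u) * v ≤ θ * a * v :=
          mul_le_mul_of_nonneg_right (mul_le_mul_of_nonneg_left hsu hθ0) hv0
        nlinarith [mul_le_mul_of_nonneg_left hkey (le_of_lt hs0)]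
      exact le_of_mul_le_mul_left hmul hA
    have hs2u : s ^ 2 * u ≤ θ * v + s * ε := by
      have h1 : s * (s * u) ≤ s * a := mul_le_mul_of_nonneg_left hsu (le_of_lt hs0)
      nlinarith
    have hrhs : θ * v + s * ε ≤ s ^ 2 * (Real.sqrt 2 * ε + 2 * θ * v) := by
      have e1 : θ * v ≤ 2 * s ^ 2 * (θ * v) := by nlinarith [mul_nonneg hθ0 hv0]
      have e2 : s * ε ≤ s ^ 2 * (Real.sqrt 2 * ε) := by
        nlinarith [mul_le_mul_of_nonneg_right h2s (mul_nonneg hs0.le hε0)]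
      nlinarith
    have hfin := le_trans hs2u hrhs
    have hs2pos : 0 < s ^ 2 := by positivity
    nlinarith

/-- deletion condition (Lemma 5). -/
theorem deletion_condition {n m : ℕ} (A : Matrix (Fin n) (Fin m) ℝ)
    (x : Fin m → ℝ) (w : Fin n → ℝ) (ε δ θ αdel : ℝ) (Tdet : Finset (Fin m))
    (ST SΔ : ℕ)
    (hw : norm2 w ≤ ε)
    (hT : Tdet.card ≤ ST)
    (hΔ : (spt x \ Tdet).card ≤ SΔ)
    (hδ : δ < 1 / 2)
    (hRIP : RIPBound A ST δ)
    (hθ : ROBound A ST SΔ θ)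
    (xdet : Fin m → ℝ)
    (hLS : IsLS A (fun j => (A.mulVec x) j + w j) Tdet xdet)
    (hαdel : αdel ≥ Real.sqrt 2 * ε + 2 * θ * norm2 (restr (spt x \ Tdet) x)) :
    ∀ i ∈ Tdet, x i = 0 → |xdet i| ≤ αdel := by
  obtain ⟨hδ0, hδ1, hRIPle⟩ := hRIP
  obtain ⟨hθ0, hRO⟩ := hθ
  set Δ : Finset (Fin m) := spt x \ Tdet with hΔdef
  set xΔ : Fin m → ℝ := restr Δ x with hxΔdef
  set z : Fin m → ℝ := fun i => restr Tdet x i - xdet i with hzdef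
  have hzT : spt z ⊆ Tdet := by
    intro i hi
    rw [spt, Finset.mem_filter] at hi
    by_contra h
    exact hi.2 (by simp [hzdef, restr, h, hLS.1 i h])
  have hxΔΔ : spt xΔ ⊆ Δ := by
    intro i hi
    rw [spt, Finset.mem_filter] at hi
    by_contra h
    exact hi.2 (by simp [hxΔdef, restr, h])
  have hdisj : Disjoint (spt z) (spt xΔ) := by
    apply Finset.disjoint_left.mpr
    intro i hi hi2
    exact (Finset.mem_sdiff.mp (hxΔΔ hi2)).2 (hzT hi)
  have hzcard : (spt z).card ≤ ST := le_trans (Finset.card_le_card hzT) hT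
  have hxΔcard : (spt xΔ).card ≤ SΔ := le_trans (Finset.card_le_card hxΔΔ) hΔ
  -- decomposition of x
  have hxdec : x = fun i => z i + xΔ i + xdet i := by
    funext i
    by_cases hiT : i ∈ Tdet
    · have hiΔ : i ∉ Δ := fun h => (Finset.mem_sdiff.mp h).2 hiT
      simp [hzdef, hxΔdef, restr, hiT, hiΔ]
    · by_cases hx0 : x i = 0
      · have hiΔ : i ∉ Δ := by
          intro h
          exact (Finset.mem_filter.mp (Finset.mem_sdiff.mp h).1).2 hx0
        simp [hzdef, hxΔdef, restr, hiT, hiΔ, hLS.1 i hiT, hx0]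
      · have hiΔ : i ∈ Δ := Finset.mem_sdiff.mpr ⟨Finset.mem_filter.mpr ⟨mem_univ i, hx0⟩, hiT⟩
        simp [hzdef, hxΔdef, restr, hiT, hiΔ, hLS.1 i hiT]
  -- residual decomposition
  have hr : ∀ j, (A.mulVec x) j + w j - (A.mulVec xdet) j
      = (A.mulVec z) j + (A.mulVec xΔ) j + w j := by
    intro j
    have h1 : A.mulVec x = fun j => (A.mulVec z) j + (A.mulVec xΔ) j + (A.mulVec xdet) j := by
      funext j
      rw [hxdec]
      simp [Matrix.mulVec, dotProduct, mul_add, Finset.sum_add_distrib]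
    rw [h1]; ring
  -- orthogonality from the normal equations
  have orth : ∑ j, (A.mulVec z) j * ((A.mulVec x) j + w j - (A.mulVec xdet) j) = 0 := by
    have h1 : ∑ j, (A.mulVec z) j * ((A.mulVec x) j + w j - (A.mulVec xdet) j)
        = ∑ i, z i * ∑ j, A j i * ((A.mulVec x) j + w j - (A.mulVec xdet) j) := by
      simp only [Matrix.mulVec, dotProduct, Finset.sum_mul, Finset.mul_sum]
      rw [Finset.sum_comm]
      exact Finset.sum_congr rfl fun i _ => Finset.sum_congr rfl fun j _ => by ring
    rw [h1]
    apply Finset.sum_eq_zero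
    intro i _
    by_cases hiT : i ∈ Tdet
    · have h2 := hLS.2 i hiT
      simp only at h2
      rw [h2, mul_zero]
    · simp [hzdef, restr, hiT, hLS.1 i hiT]
  have hu0 : 0 ≤ norm2 z := norm2_nonneg' _
  have ha0 : 0 ≤ norm2 (A.mulVec z) := norm2_nonneg' _
  have hv0 : 0 ≤ norm2 xΔ := norm2_nonneg' _
  have hε0 : 0 ≤ ε := le_trans (norm2_nonneg' w) hw
  -- a² ≤ θ u v + a ε
  have hsplit : norm2 (A.mulVec z) ^ 2 + (∑ j, (A.mulVec z) j * (A.mulVec xΔ) j)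
      + (∑ j, (A.mulVec z) j * w j) = 0 := by
    rw [sq_norm2']
    rw [← orth]
    rw [← Finset.sum_add_distrib, ← Finset.sum_add_distrib]
    exact Finset.sum_congr rfl fun j _ => by rw [hr j]; ring
  have hROb : |∑ j, (A.mulVec z) j * (A.mulVec xΔ) j| ≤ θ * norm2 z * norm2 xΔ :=
    hRO z xΔ hdisj hzcard hxΔcard
  have hCSb : |∑ j, (A.mulVec z) j * w j| ≤ norm2 (A.mulVec z) * ε :=
    le_trans (cs' _ _) (mul_le_mul_of_nonneg_left hw ha0)
  have hkey : norm2 (A.mulVec z) ^ 2 ≤ θ * norm2 z * norm2 xΔ + norm2 (A.mulVec z) * ε := by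
    have h1 := neg_abs_le (∑ j, (A.mulVec z) j * (A.mulVec xΔ) j)
    have h2 := neg_abs_le (∑ j, (A.mulVec z) j * w j)
    linarith
  have hRIPb : (1 - δ) * norm2 z ^ 2 ≤ norm2 (A.mulVec z) ^ 2 := by
    rw [sq_norm2', sq_norm2']
    exact (hRIPle z hzcard).1
  have hub : norm2 z ≤ Real.sqrt 2 * ε + 2 * θ * norm2 xΔ :=
    deletion_numeric _ _ _ _ _ _ hu0 ha0 hv0 hε0 hθ0 hδ hRIPb hkey
  intro i hiT hxi
  have hzi : z i = -xdet i := by simp [hzdef, restr, hiT, hxi]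
  have habs : |xdet i| ≤ norm2 z := by
    have h1 := abs_le_norm2' z i
    rwa [hzi, abs_neg] at h1
  calc |xdet i| ≤ norm2 z := habs
    _ ≤ Real.sqrt 2 * ε + 2 * θ * norm2 xΔ := hub
    _ ≤ αdel := hαdel
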